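/- arXiv:1111.2465 — 4 statements merged into one kernel-verified Lean document; each statement's English description precedes it below -/
import Mathlib

section
/- Let {m_i} be an unbounded sequence of positive integers and k a positive integer. Then for each residue class j mod k, for Lebesgue-almost every θ ∈ [0,1], the congruence ⌊m_i θ⌋ ≡ j (mod k) holds for infinitely many i. -/
/-!
For fixed `M > 0`, the set of `θ` with `⌊M θ⌋ ≡ j (mod k)` is a union of intervals
`[n/M, (n+1)/M)` over one residue class of `n`, so it fills every interval `[a, b]` up to a
proportion `1/k`, with an error `O(1/M)`. Along a subsequence with `m i → ∞`, reverse Fatou for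
sets shows that the limsup of these sets still fills every interval up to a proportion `1/k`, and
by the Lebesgue density theorem a measurable set with this property has full measure.
-/

open MeasureTheory Set Filter Topology
open scoped Finset

theorem MeasureTheory.limsup_measure_le_measure_limsup {α : Type*} [MeasurableSpace α]
    {μ : Measure α} [IsFiniteMeasure μ] {s : ℕ → Set α} (hs : ∀ i, NullMeasurableSet (s i) μ) :
    limsup (fun i => μ (s i)) atTop ≤ μ (limsup s atTop) := by
  have htail : Antitone fun n => ⋃ i ≥ n, s i := fun n n' h =>
    biUnion_mono (fun i (hi : n' ≤ i) => h.trans hi) fun _ _ => subset_rfl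
  calc limsup (fun i => μ (s i)) atTop = ⨅ n, ⨆ i ≥ n, μ (s i) := limsup_eq_iInf_iSup_of_nat
    _ ≤ ⨅ n, μ (⋃ i ≥ n, s i) :=
      iInf_mono fun n => iSup₂_le fun i hi => measure_mono (subset_biUnion_of_mem hi)
    _ = μ (⋂ n, ⋃ i ≥ n, s i) :=
      (htail.measure_iInter (fun n => .biUnion (to_countable _) fun i _ => hs i)
        ⟨0, measure_ne_top μ _⟩).symm
    _ = μ (limsup s atTop) := by
      simp only [limsup_eq_iInf_iSup_of_nat, iInf_eq_iInter, iSup_eq_iUnion]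

theorem Besicovitch.ae_mem_of_le_measure_inter_closedBall_div {β : Type*} [MetricSpace β]
    [MeasurableSpace β] [BorelSpace β] [SecondCountableTopology β] [HasBesicovitchCovering β]
    (μ : Measure β) [IsLocallyFiniteMeasure μ] {s : Set β} (hs : MeasurableSet s)
    {c : ENNReal} (hc : c ≠ 0)
    (h : ∀ x, ∀ᶠ r in 𝓝[>] 0, c ≤ μ (s ∩ Metric.closedBall x r) / μ (Metric.closedBall x r)) :
    ∀ᵐ x ∂μ, x ∈ s := by
  filter_upwards [Besicovitch.ae_tendsto_measure_inter_div_of_measurableSet μ hs] with x hx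
  by_contra hxs
  rw [indicator_of_notMem hxs] at hx
  exact hc (nonpos_iff_eq_zero.1 (ge_of_tendsto hx (h x)))

theorem Real.ae_mem_of_ofReal_mul_le_volume_inter_Icc {s : Set ℝ} (hs : MeasurableSet s)
    {c : ℝ} (hc : 0 < c) (h : ∀ a b, ENNReal.ofReal (c * (b - a)) ≤ volume (s ∩ Icc a b)) :
    ∀ᵐ x, x ∈ s := by
  refine Besicovitch.ae_mem_of_le_measure_inter_closedBall_div volume hs
    (ENNReal.ofReal_pos.2 hc).ne' fun x => ?_
  filter_upwards [self_mem_nhdsWithin] with r (hr : 0 < r)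
  rw [Real.closedBall_eq_Icc, Real.volume_Icc, ENNReal.le_div_iff_mul_le
    (Or.inl (ENNReal.ofReal_pos.2 (by linarith)).ne') (Or.inl ENNReal.ofReal_ne_top),
    ← ENNReal.ofReal_mul hc.le]
  exact h _ _

theorem Int.card_Ico_filter_modEq_ge (a b v : ℤ) {r : ℤ} (hr : 0 < r) :
    ((b : ℝ) - a) / r - 1 ≤ #{x ∈ Finset.Ico a b | x ≡ v [ZMOD r]} := by
  have hq : ((b : ℚ) - a) / r - 1 ≤ #{x ∈ Finset.Ico a b | x ≡ v [ZMOD r]} := by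
    rw [← Int.cast_natCast (R := ℚ), Int.Ico_filter_modEq_card a b hr v]
    set B := (b - v) / (r : ℚ)
    set A := (a - v) / (r : ℚ)
    calc ((b : ℚ) - a) / r - 1 = B - (A + 1) := by simp only [A, B]; ring
      _ ≤ ((⌈B⌉ - ⌈A⌉ : ℤ) : ℚ) := by
        push_cast; exact sub_le_sub (Int.le_ceil B) (Int.ceil_lt_add_one A).le
      _ ≤ _ := by exact_mod_cast le_max_left _ _
  exact_mod_cast (Rat.cast_le (K := ℝ)).2 hq

theorem ofReal_le_volume_floor_cast_eq_inter_Icc {k : ℕ} (hk : 0 < k) (j : ZMod k) (a b : ℝ) :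
    ENNReal.ofReal ((b - a) / k - 3) ≤ volume ({x : ℝ | (⌊x⌋ : ZMod k) = j} ∩ Icc a b) := by
  obtain ⟨v, rfl⟩ := ZMod.intCast_surjective j
  set T := {n ∈ Finset.Ico ⌈a⌉ ⌊b⌋ | n ≡ v [ZMOD k]}
  have hcard : (b - a) / k - 3 ≤ #T := by
    refine le_trans ?_ (Int.card_Ico_filter_modEq_ge _ _ v (Int.natCast_pos.2 hk))
    have hlen : b - a - 2 ≤ (⌊b⌋ : ℝ) - ⌈a⌉ := by
      linarith [Int.lt_floor_add_one b, Int.ceil_lt_add_one a]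
    have h2k : 2 / (k : ℝ) ≤ 2 := div_le_self zero_le_two (by exact_mod_cast hk)
    calc (b - a) / k - 3 ≤ (b - a - 2) / k - 1 := by rw [sub_div (b - a) 2]; linarith
      _ ≤ _ := by push_cast; gcongr
  have hsub : ⋃ n ∈ T, Int.floor ⁻¹' {n} ⊆ {x : ℝ | (⌊x⌋ : ZMod k) = v} ∩ Icc a b := by
    simp only [iUnion_subset_iff, Int.preimage_floor_singleton]
    intro n hn x hx
    obtain ⟨hn, hnv⟩ := Finset.mem_filter.1 hn
    obtain ⟨han, hnb⟩ := Finset.mem_Ico.1 hn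
    refine ⟨?_, ?_, ?_⟩
    · show ((⌊x⌋ : ℤ) : ZMod k) = v
      rw [Int.floor_eq_iff.2 ⟨hx.1, hx.2⟩]
      exact (ZMod.intCast_eq_intCast_iff _ _ _).2 hnv
    · exact (Int.le_ceil a).trans ((Int.cast_le.2 han).trans hx.1)
    · have : (n : ℝ) + 1 ≤ ⌊b⌋ := by exact_mod_cast hnb
      linarith [Int.floor_le b, hx.2]
  calc ENNReal.ofReal ((b - a) / k - 3) ≤ #T := by
        simpa using ENNReal.ofReal_le_ofReal hcard
    _ = ∑ n ∈ T, volume (Int.floor ⁻¹' {n} : Set ℝ) := by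
        simp [Int.preimage_floor_singleton]
    _ = volume (⋃ n ∈ T, Int.floor ⁻¹' {n} : Set ℝ) :=
        (measure_biUnion_finset (pairwiseDisjoint_fiber _ _)
          fun n _ => Int.measurable_floor (measurableSet_singleton n)).symm
    _ ≤ _ := measure_mono hsub

theorem ofReal_le_volume_floor_mul_cast_eq_inter_Icc {M : ℝ} (hM : 0 < M) {k : ℕ} (hk : 0 < k)
    (j : ZMod k) (a b : ℝ) :
    ENNReal.ofReal ((b - a) / k - 3 / M) ≤
      volume ({θ : ℝ | (⌊M * θ⌋ : ZMod k) = j} ∩ Icc a b) := by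
  have hscale : {θ : ℝ | (⌊M * θ⌋ : ZMod k) = j} ∩ Icc a b =
      (M * ·) ⁻¹' ({x : ℝ | (⌊x⌋ : ZMod k) = j} ∩ Icc (M * a) (M * b)) := by
    rw [preimage_inter, preimage_const_mul_Icc₀ _ _ hM, mul_div_cancel_left₀ _ hM.ne',
      mul_div_cancel_left₀ _ hM.ne']
    rfl
  rw [hscale, Real.volume_preimage_mul_left hM.ne', abs_of_pos (inv_pos.2 hM)]
  calc ENNReal.ofReal ((b - a) / k - 3 / M)
      = ENNReal.ofReal M⁻¹ * ENNReal.ofReal ((M * b - M * a) / k - 3) := by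
        rw [← ENNReal.ofReal_mul (inv_nonneg.2 hM.le)]
        congr 1
        field_simp
    _ ≤ _ := by gcongr; exact ofReal_le_volume_floor_cast_eq_inter_Icc hk j _ _

theorem measurableSet_floor_mul_cast_eq (M : ℝ) (k : ℕ) (j : ZMod k) :
    MeasurableSet {θ : ℝ | (⌊M * θ⌋ : ZMod k) = j} :=
  Int.measurable_floor.comp (measurable_const_mul M)
    (.of_discrete (s := {n : ℤ | (n : ZMod k) = j}))

theorem ofReal_le_volume_limsup_floor_mul_cast_eq_inter_Icc {M : ℕ → ℝ}
    (hM : Tendsto M atTop atTop) {k : ℕ} (hk : 0 < k) (j : ZMod k) (a b : ℝ) :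
    ENNReal.ofReal ((b - a) / k) ≤
      volume (limsup (fun i => {θ : ℝ | (⌊M i * θ⌋ : ZMod k) = j}) atTop ∩ Icc a b) := by
  rw [← Measure.restrict_apply' measurableSet_Icc]
  refine le_trans ?_ (limsup_measure_le_measure_limsup fun i =>
    (measurableSet_floor_mul_cast_eq (M i) k j).nullMeasurableSet)
  have hlower : ∀ᶠ i in atTop, ENNReal.ofReal ((b - a) / k - 3 / M i) ≤
      volume.restrict (Icc a b) {θ : ℝ | (⌊M i * θ⌋ : ZMod k) = j} := by
    filter_upwards [hM.eventually_gt_atTop 0] with i hi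
    rw [Measure.restrict_apply (measurableSet_floor_mul_cast_eq (M i) k j)]
    exact ofReal_le_volume_floor_mul_cast_eq_inter_Icc hi hk j a b
  have hlim : Tendsto (fun i => ENNReal.ofReal ((b - a) / k - 3 / M i)) atTop
      (𝓝 (ENNReal.ofReal ((b - a) / k))) := by
    simpa using ENNReal.tendsto_ofReal (tendsto_const_nhds.sub (hM.const_div_atTop 3))
  exact hlim.limsup_eq ▸ limsup_le_limsup hlower

theorem ae_mem_limsup_floor_mul_cast_eq {M : ℕ → ℝ} (hM : Tendsto M atTop atTop) {k : ℕ}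
    (hk : 0 < k) (j : ZMod k) :
    ∀ᵐ θ, θ ∈ limsup (fun i => {θ : ℝ | (⌊M i * θ⌋ : ZMod k) = j}) atTop :=
  Real.ae_mem_of_ofReal_mul_le_volume_inter_Icc
    (MeasurableSet.measurableSet_limsup fun i => measurableSet_floor_mul_cast_eq (M i) k j)
    (inv_pos.2 (Nat.cast_pos.2 hk)) fun a b => by
      simpa [inv_mul_eq_div] using ofReal_le_volume_limsup_floor_mul_cast_eq_inter_Icc hM hk j a b

theorem stmt2_general (m : ℕ → ℕ) (hunb : ∀ C : ℕ, ∃ i, C < m i)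
    (k : ℕ) (hk : 0 < k) (j : ZMod k) :
    ∀ᵐ θ ∂(MeasureTheory.volume.restrict (Set.Icc (0:ℝ) 1)),
      {i : ℕ | ((⌊(m i : ℝ) * θ⌋ : ZMod k) = j)}.Infinite := by
  have hfreq : ∀ C, ∃ᶠ i in atTop, C < m i := by
    refine fun C => frequently_atTop.2 fun N => ?_
    obtain ⟨i, hi⟩ := hunb (C + (Finset.range N).sup m)
    refine ⟨i, ?_, by omega⟩
    by_contra! hiN
    have := Finset.le_sup (f := m) (Finset.mem_range.2 hiN)
    omega
  obtain ⟨φ, hφ, hmφ⟩ := extraction_forall_of_frequently hfreq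
  have hM : Tendsto (fun n => (m (φ n) : ℝ)) atTop atTop :=
    tendsto_natCast_atTop_atTop.comp (tendsto_atTop_mono (fun n => (hmφ n).le) tendsto_id)
  filter_upwards [ae_restrict_of_ae (ae_mem_limsup_floor_mul_cast_eq hM hk j)] with θ hθ
  rw [mem_limsup_iff_frequently_mem] at hθ
  exact Nat.frequently_atTop_iff_infinite.1 (hφ.tendsto_atTop.frequently hθ)

/-- For an unbounded sequence of positive integers `m i`, a positive integer `k`
and any residue class `j` mod `k`, for Lebesgue-almost every `θ ∈ [0,1]` the
congruence `⌊m i * θ⌋ ≡ j (mod k)` holds for infinitely many `i`. -/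
theorem stmt2 (m : ℕ → ℕ) (hm : ∀ i, 0 < m i) (hunb : ∀ C : ℕ, ∃ i, C < m i)
    (k : ℕ) (hk : 0 < k) (j : ZMod k) :
    ∀ᵐ θ ∂(MeasureTheory.volume.restrict (Set.Icc (0:ℝ) 1)),
      {i : ℕ | ((⌊(m i : ℝ) * θ⌋ : ZMod k) = j)}.Infinite :=
  stmt2_general m hunb k hk j
end

section
/- Let {m_i} be a strictly increasing sequence of positive integers with m_{i+1}/m_i → ∞ (superlacunary), and fix an integer k ≥ 1. Then for each residue class j mod k and almost every θ ∈ [0,1], the sequence X_i(θ) = ⌊m_i θ⌋ mod k takes the value j infinitely often. -/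
/-!
Inside an interval of length `ℓ`, the set where `⌊M θ⌋ ≡ j (mod k)` is a union of intervals of
length `1/M` spaced `k/M` apart, so it has measure at least `ℓ/k - 2/M`. As `m i → ∞`, the set
of `θ` with `⌊m i θ⌋ ≢ j` for all `i ≥ N` therefore fills at most a fraction `1 - 1/(2k)` of
every ball; having no Lebesgue density point, it is null.
-/

open MeasureTheory Set Filter Metric

theorem measure_eq_zero_of_forall_measure_inter_closedBall_le {β : Type*} [MetricSpace β]
    [MeasurableSpace β] [BorelSpace β] [SecondCountableTopology β] [HasBesicovitchCovering β]
    (μ : Measure β) [IsLocallyFiniteMeasure μ] {s : Set β} {c : ENNReal} (hc : c < 1)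
    (h : ∀ x, ∀ r > 0, μ (s ∩ closedBall x r) ≤ c * μ (closedBall x r)) : μ s = 0 := by
  by_contra hs
  have : (ae (μ.restrict s)).NeBot := ae_neBot.2 (by simpa using hs)
  obtain ⟨x, hx⟩ := (Besicovitch.ae_tendsto_measure_inter_div μ s).exists
  obtain ⟨r, hr, hr0⟩ := ((hx.eventually (lt_mem_nhds hc)).and self_mem_nhdsWithin).exists
  exact (ENNReal.div_le_of_le_mul (h x r hr0)).not_gt hr

theorem ofReal_le_volume_setOf_floor_cast_eq_inter_Ico {k : ℕ} (hk : 0 < k) (j : ZMod k)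
    (a b : ℝ) :
    ENNReal.ofReal ((b - a) / k - 2) ≤ volume ({x : ℝ | (⌊x⌋ : ZMod k) = j} ∩ Ico a b) := by
  have hkR : (0 : ℝ) < k := by exact_mod_cast hk
  set n : ℤ → ℤ := fun q => j.val + k * q
  -- `q₀ ≤ q ≤ q₁` exactly when `[n q, n q + 1) ⊆ [a, b)`.
  set q₀ : ℤ := ⌈(a - j.val) / k⌉
  set q₁ : ℤ := ⌊(b - j.val - 1) / k⌋
  have hn_inj : n.Injective := fun p q hpq => by
    simpa [n, hk.ne'] using hpq
  have hsub : ∀ q ∈ Finset.Icc q₀ q₁,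
      Int.floor ⁻¹' {n q} ⊆ {x : ℝ | (⌊x⌋ : ZMod k) = j} ∩ Ico a b := by
    intro q hq x hx
    simp only [Finset.mem_Icc] at hq
    simp only [mem_preimage, mem_singleton_iff] at hx
    have : NeZero k := ⟨hk.ne'⟩
    refine ⟨by simp [hx, n], ?_⟩
    have hq₀ : (a - j.val) / k ≤ q := (Int.le_ceil _).trans (by exact_mod_cast hq.1)
    have hq₁ : (q : ℝ) ≤ (b - j.val - 1) / k := (Int.cast_le.2 hq.2).trans (Int.floor_le _)
    rw [div_le_iff₀ hkR] at hq₀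
    rw [le_div_iff₀ hkR] at hq₁
    have h₁ := Int.floor_le x
    have h₂ := Int.lt_floor_add_one x
    rw [hx] at h₁ h₂
    push_cast [n] at h₁ h₂
    constructor <;> nlinarith
  have hcard : (b - a) / k - 2 ≤ (Finset.Icc q₀ q₁).card := by
    have h₀ : (q₀ : ℝ) < (a - j.val) / k + 1 := Int.ceil_lt_add_one _
    have h₁ : (b - j.val - 1) / k - 1 < (q₁ : ℝ) := Int.sub_one_lt_floor _
    have hC : ((q₁ + 1 - q₀ : ℤ) : ℝ) ≤ (Finset.Icc q₀ q₁).card := by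
      rw [Int.card_Icc]; exact_mod_cast Int.self_le_toNat _
    have : (b - j.val - 1) / k - (a - j.val) / k = (b - a) / k - 1 / k := by ring
    have : 1 / (k : ℝ) ≤ 1 := by rw [div_le_one hkR]; exact_mod_cast hk
    push_cast at hC
    linarith
  calc ENNReal.ofReal ((b - a) / k - 2)
      ≤ (Finset.Icc q₀ q₁).card := by
        simpa using ENNReal.ofReal_le_ofReal hcard
    _ = volume (⋃ q ∈ Finset.Icc q₀ q₁, (Int.floor ⁻¹' {n q} : Set ℝ)) := by
        rw [measure_biUnion_finset]
        · simp [Int.preimage_floor_singleton]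
        · intro p _ q _ hpq
          exact Disjoint.preimage _ (disjoint_singleton.2 (hn_inj.ne hpq))
        · intro q _
          exact measurableSet_singleton _ |>.preimage Int.measurable_floor
    _ ≤ _ := measure_mono (iUnion₂_subset hsub)

theorem ofReal_le_volume_setOf_floor_mul_cast_eq_inter_Ico {k : ℕ} (hk : 0 < k) (j : ZMod k)
    {M : ℝ} (hM : 0 < M) (a b : ℝ) :
    ENNReal.ofReal ((b - a) / k - 2 / M) ≤
      volume ({θ : ℝ | (⌊M * θ⌋ : ZMod k) = j} ∩ Ico a b) := by
  have hpre : {θ : ℝ | (⌊M * θ⌋ : ZMod k) = j} ∩ Ico a b =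
      (M * ·) ⁻¹' ({x : ℝ | (⌊x⌋ : ZMod k) = j} ∩ Ico (M * a) (M * b)) := by
    ext θ
    simp [mul_le_mul_iff_right₀ hM, mul_lt_mul_iff_right₀ hM]
  rw [hpre, Real.volume_preimage_mul_left hM.ne', abs_of_pos (inv_pos.2 hM)]
  calc ENNReal.ofReal ((b - a) / k - 2 / M)
      = ENNReal.ofReal M⁻¹ * ENNReal.ofReal ((M * b - M * a) / k - 2) := by
        rw [← ENNReal.ofReal_mul (inv_nonneg.2 hM.le)]
        congr 1
        field_simp
    _ ≤ _ := by gcongr; exact ofReal_le_volume_setOf_floor_cast_eq_inter_Ico hk j _ _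

theorem measurableSet_setOf_floor_mul_cast_eq {k : ℕ} (j : ZMod k) (c : ℝ) :
    MeasurableSet {θ : ℝ | (⌊c * θ⌋ : ZMod k) = j} :=
  (measurable_const_mul c).floor (MeasurableSet.of_discrete (s := {n : ℤ | (n : ZMod k) = j}))

theorem volume_setOf_forall_floor_mul_ne_eq_zero {m : ℕ → ℝ} (hm : Tendsto m atTop atTop)
    {k : ℕ} (hk : 0 < k) (j : ZMod k) (N : ℕ) :
    volume {θ : ℝ | ∀ i ≥ N, (⌊m i * θ⌋ : ZMod k) ≠ j} = 0 := by
  have hkR : (0 : ℝ) < k := by exact_mod_cast hk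
  have hc : 0 ≤ 1 - 1 / (2 * (k : ℝ)) := by
    rw [sub_nonneg, div_le_one (by positivity)]
    linarith [show (1 : ℝ) ≤ k by exact_mod_cast hk]
  refine measure_eq_zero_of_forall_measure_inter_closedBall_le volume
    (c := ENNReal.ofReal (1 - 1 / (2 * k))) (ENNReal.ofReal_lt_one.2 (by simp [hkR])) ?_
  intro x r hr
  obtain ⟨i, hiN, hi⟩ :=
    ((eventually_ge_atTop N).and (hm.eventually_gt_atTop (2 * k / r))).exists
  have hmi : 0 < m i := lt_trans (by positivity) hi
  set E := {θ : ℝ | (⌊m i * θ⌋ : ZMod k) = j}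
  have hE : ENNReal.ofReal (r / k) ≤ volume (closedBall x r ∩ E) := by
    calc ENNReal.ofReal (r / k) ≤ ENNReal.ofReal (((x + r) - (x - r)) / k - 2 / m i) := by
          gcongr
          rw [div_lt_iff₀ hr] at hi
          have : 2 / m i ≤ r / k := by
            rw [div_le_div_iff₀ hmi hkR]; linarith
          linarith [show ((x + r) - (x - r)) / k = 2 * (r / k) by ring]
      _ ≤ volume (E ∩ Ico (x - r) (x + r)) :=
          ofReal_le_volume_setOf_floor_mul_cast_eq_inter_Ico hk j hmi _ _
      _ ≤ volume (closedBall x r ∩ E) := by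
          rw [inter_comm, Real.closedBall_eq_Icc]
          gcongr
          exact Ico_subset_Icc_self
  have hsplit :
      volume (closedBall x r ∩ E) + volume (closedBall x r \ E) = volume (closedBall x r) :=
    measure_inter_add_sdiff _ (measurableSet_setOf_floor_mul_cast_eq j (m i))
  calc volume ({θ : ℝ | ∀ i ≥ N, (⌊m i * θ⌋ : ZMod k) ≠ j} ∩ closedBall x r)
      ≤ volume (closedBall x r \ E) := measure_mono fun θ ⟨hθ, hθr⟩ => ⟨hθr, hθ i hiN⟩
    _ ≤ volume (closedBall x r) - ENNReal.ofReal (r / k) := by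
        refine ENNReal.le_sub_of_add_le_right ENNReal.ofReal_ne_top ?_
        rw [← hsplit, add_comm]
        gcongr
    _ = ENNReal.ofReal (1 - 1 / (2 * k)) * volume (closedBall x r) := by
        rw [Real.volume_closedBall, ← ENNReal.ofReal_sub _ (by positivity),
          ← ENNReal.ofReal_mul hc]
        congr 1
        field_simp

theorem ae_infinite_setOf_floor_mul_cast_eq {m : ℕ → ℝ} (hm : Tendsto m atTop atTop)
    {k : ℕ} (hk : 0 < k) (j : ZMod k) :
    ∀ᵐ θ : ℝ, {i : ℕ | (⌊m i * θ⌋ : ZMod k) = j}.Infinite := by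
  simp_rw [← Nat.frequently_atTop_iff_infinite, frequently_atTop]
  refine ae_all_iff.2 fun N => ?_
  simpa [ae_iff] using volume_setOf_forall_floor_mul_ne_eq_zero hm hk j N

theorem stmt3_general (m : ℕ → ℕ) (hmono : StrictMono m)
    (k : ℕ) (hk : 0 < k) (j : ZMod k) :
    ∀ᵐ θ ∂(MeasureTheory.volume.restrict (Set.Icc (0:ℝ) 1)),
      {i : ℕ | ((⌊(m i : ℝ) * θ⌋ : ZMod k) = j)}.Infinite :=
  ae_restrict_of_ae <| ae_infinite_setOf_floor_mul_cast_eq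
    (tendsto_natCast_atTop_atTop.comp hmono.tendsto_atTop) hk j

/-- For a strictly increasing superlacunary sequence of positive integers
(`m_{i+1}/m_i → ∞`), a positive integer `k` and a residue class `j` mod `k`,
for Lebesgue-almost every `θ ∈ [0,1]` the sequence `X_i(θ) = ⌊m_i θ⌋ mod k`
takes the value `j` infinitely often. -/
theorem stmt3 (m : ℕ → ℕ) (hm : ∀ i, 0 < m i) (hmono : StrictMono m)
    (hsuper : Filter.Tendsto (fun i => (m (i+1) : ℝ) / (m i : ℝ)) Filter.atTop Filter.atTop)
    (k : ℕ) (hk : 0 < k) (j : ZMod k) :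
    ∀ᵐ θ ∂(MeasureTheory.volume.restrict (Set.Icc (0:ℝ) 1)),
      {i : ℕ | ((⌊(m i : ℝ) * θ⌋ : ZMod k) = j)}.Infinite :=
  stmt3_general m hmono k hk j
end

section
/- Let A_n be constructed by removing, from X = S^1 × ℤ/kℤ, the sets ∪_{i=0}^{kq_n - 1} ∪_{j=1}^{N} ([d_j - k‖q_n α‖ - iα, d_j - iα) × ℤ/kℤ). Then the symmetric difference satisfies μ(A_n △ T(A_n)) ≤ 2 k² N ‖q_n α‖, where T(x,ℓ) = (x + α mod 1, ℓ + I(x) mod k). -/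
open MeasureTheory
open scoped ENNReal

/-!
Write `A = S ×ˢ univ`, where `S ⊆ [0,1)` is the set of points whose first `n = k q` rotation
iterates `x + iα` avoid the `N` windows `[d_j - t, d_j) mod 1` of length `t = k δ`. The skew
product permutes each fibre, so `T(A) = R(S) ×ˢ univ` for the rotation `R`, and `R(S)` imposes the
same conditions with all indices shifted down by one. Hence `S ∆ R(S)` consists of points whose
`(-1)`-st or `(n-1)`-st iterate lies in a window: two unions of `N` windows, each of measure at
most `t`. The fibre `ℤ/kℤ` contributes the remaining factor `k`.
-/

open Set Function
open scoped symmDiff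

section FloorRing

variable {R : Type*} [Ring R] [LinearOrder R] [FloorRing R]

theorem Function.Periodic.map_fract {β : Type*} {f : R → β} (hf : Periodic f 1) (z : R) :
    f (Int.fract z) = f z := by
  rw [← Int.self_sub_floor, ← mul_one (⌊z⌋ : R), hf.sub_int_mul_eq]

variable [IsOrderedRing R]

theorem Int.fract_fract_add (a b : R) : Int.fract (Int.fract a + b) = Int.fract (a + b) := by
  rw [← Int.self_sub_floor a, sub_add_eq_add_sub, Int.fract_sub_intCast]

theorem image_fract_add_setOf_periodic {p : R → Prop} (hp : Periodic p 1) (α : R) :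
    (fun x => Int.fract (x + α)) '' {x ∈ Ico 0 1 | p x} = {y ∈ Ico 0 1 | p (y - α)} := by
  ext y
  constructor
  · rintro ⟨x, ⟨hx, hpx⟩, rfl⟩
    refine ⟨⟨Int.fract_nonneg _, Int.fract_lt_one _⟩, ?_⟩
    have hshift : Int.fract (x + α) - α = Int.fract x - ⌊x + α⌋ * 1 := by
      rw [Int.fract_eq_self.mpr hx, ← Int.self_sub_floor (x + α), mul_one]; abel
    rwa [hshift, hp.sub_int_mul_eq, hp.map_fract]
  · rintro ⟨hy, hpy⟩
    refine ⟨Int.fract (y - α), ⟨⟨Int.fract_nonneg _, Int.fract_lt_one _⟩, ?_⟩, ?_⟩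
    · rwa [hp.map_fract]
    · simp only [Int.fract_fract_add, sub_add_cancel, Int.fract_eq_self.mpr hy]

end FloorRing

theorem Set.image_skewProduct_prod_univ {X G : Type*} [AddGroup G] (f : X → X) (g : X → G)
    (s : Set X) :
    (fun z : X × G => (f z.1, z.2 + g z.1)) '' (s ×ˢ univ) = (f '' s) ×ˢ univ := by
  ext ⟨y, m⟩
  constructor
  · rintro ⟨⟨x, l⟩, ⟨hx, -⟩, h⟩
    cases h
    exact ⟨mem_image_of_mem f hx, mem_univ _⟩
  · rintro ⟨⟨x, hx, rfl⟩, -⟩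
    exact ⟨(x, m - g x), ⟨hx, mem_univ _⟩, by simp⟩

theorem symmDiff_setOf_forall_lt_succ_subset {X : Type*} (s : Set X) (P : ℕ → X → Prop)
    (n : ℕ) :
    {x ∈ s | ∀ i < n, P (i + 1) x} ∆ {x ∈ s | ∀ i < n, P i x} ⊆
      {x ∈ s | ¬ P 0 x} ∪ {x ∈ s | ¬ P n x} := by
  rintro x (⟨⟨hs, hsucc⟩, hx⟩ | ⟨⟨hs, hall⟩, hx⟩)
  · simp only [mem_ofPred_eq, hs, true_and, not_forall] at hx
    obtain ⟨i, hi, hPi⟩ := hx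
    cases i with
    | zero => exact .inl ⟨hs, hPi⟩
    | succ i => exact absurd (hsucc i (by omega)) hPi
  · simp only [mem_ofPred_eq, hs, true_and, not_forall] at hx
    obtain ⟨i, hi, hPi⟩ := hx
    obtain rfl | hlt := eq_or_lt_of_le (Nat.succ_le_of_lt hi)
    · exact .inr ⟨hs, hPi⟩
    · exact absurd (hall (i + 1) hlt) hPi

theorem volume_setOf_fract_add_lt_le (c t : ℝ) :
    volume {x ∈ Ico (0 : ℝ) 1 | Int.fract (x + c) < t} ≤ ENNReal.ofReal t := by
  set f := Int.fract c
  have hf0 : 0 ≤ f := Int.fract_nonneg c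
  have hf1 : f < 1 := Int.fract_lt_one c
  have hsub : {x ∈ Ico (0 : ℝ) 1 | Int.fract (x + c) < t} ⊆
      Ico 0 (t - f) ∪ Ico (1 - f) (1 - f + min t f) := by
    rintro x ⟨⟨hx0, hx1⟩, hx⟩
    rw [add_comm, ← Int.fract_fract_add, add_comm] at hx
    rcases lt_or_ge (x + f) 1 with h | h
    · rw [Int.fract_eq_self.mpr ⟨by linarith, h⟩] at hx
      exact .inl ⟨hx0, by linarith⟩
    · rw [← Int.fract_sub_one, Int.fract_eq_self.mpr ⟨by linarith, by linarith⟩] at hx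
      exact .inr ⟨by linarith, by rw [add_min]; exact lt_min (by linarith) (by linarith)⟩
  calc volume {x ∈ Ico (0 : ℝ) 1 | Int.fract (x + c) < t}
      ≤ volume (Ico 0 (t - f)) + volume (Ico (1 - f) (1 - f + min t f)) :=
        (measure_mono hsub).trans (measure_union_le _ _)
    _ = ENNReal.ofReal (t - f) + ENNReal.ofReal (min t f) := by
        simp only [Real.volume_Ico, sub_zero, add_sub_cancel_left]
    _ ≤ ENNReal.ofReal t := by
        rcases le_total t f with h | h
        · simp [min_eq_left h, ENNReal.ofReal_eq_zero.mpr (sub_nonpos.mpr h)]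
        · rw [min_eq_right h, ← ENNReal.ofReal_add (sub_nonneg.mpr h) hf0, sub_add_cancel]

def OutsideWindows {ι : Type*} (a : ι → ℝ) (t y : ℝ) : Prop :=
  ∀ j, ¬ Int.fract (y - a j) < t

theorem periodic_outsideWindows {ι : Type*} (a : ι → ℝ) (t : ℝ) :
    Periodic (OutsideWindows a t) 1 := by
  intro y
  simp only [OutsideWindows, add_sub_right_comm, Int.fract_add_one]

theorem volume_setOf_not_outsideWindows_le {ι : Type*} [Fintype ι] (a : ι → ℝ) (t c : ℝ) :
    volume {x ∈ Ico (0 : ℝ) 1 | ¬ OutsideWindows a t (x + c)} ≤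
      Fintype.card ι * ENNReal.ofReal t := by
  have hsub : {x ∈ Ico (0 : ℝ) 1 | ¬ OutsideWindows a t (x + c)} ⊆
      ⋃ j, {x ∈ Ico (0 : ℝ) 1 | Int.fract (x + (c - a j)) < t} := by
    rintro x ⟨hx, hout⟩
    simp only [OutsideWindows, not_forall, not_not] at hout
    obtain ⟨j, hj⟩ := hout
    exact mem_iUnion.mpr ⟨j, hx, by rwa [← add_sub_assoc]⟩
  calc _ ≤ ∑ j, volume {x ∈ Ico (0 : ℝ) 1 | Int.fract (x + (c - a j)) < t} :=
        (measure_mono hsub).trans (measure_iUnion_fintype_le _ _)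
    _ ≤ ∑ _j : ι, ENNReal.ofReal t :=
        Finset.sum_le_sum fun j _ => volume_setOf_fract_add_lt_le _ t
    _ = Fintype.card ι * ENNReal.ofReal t := by simp

def orbitAvoidingSet {ι : Type*} (a : ι → ℝ) (t α : ℝ) (n : ℕ) : Set ℝ :=
  {x ∈ Ico 0 1 | ∀ i < n, OutsideWindows a t (x + i * α)}

theorem volume_symmDiff_image_orbitAvoidingSet_le {ι : Type*} [Fintype ι] (a : ι → ℝ)
    (t α : ℝ) (n : ℕ) :
    volume (orbitAvoidingSet a t α n ∆
        ((fun x => Int.fract (x + α)) '' orbitAvoidingSet a t α n)) ≤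
      2 * Fintype.card ι * ENNReal.ofReal t := by
  have hper : Periodic (fun x => ∀ i < n, OutsideWindows a t (x + i * α)) 1 := by
    intro x
    simp only [add_right_comm x 1, periodic_outsideWindows a t _]
  set P : ℕ → ℝ → Prop := fun i y => OutsideWindows a t (y - α + i * α)
  have hS : orbitAvoidingSet a t α n = {x ∈ Ico 0 1 | ∀ i < n, P (i + 1) x} := by
    simp only [P, orbitAvoidingSet, Nat.cast_succ, add_one_mul, sub_add_add_cancel]
  rw [orbitAvoidingSet, image_fract_add_setOf_periodic hper, ← orbitAvoidingSet, hS]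
  calc _ ≤ volume ({x ∈ Ico 0 1 | ¬ P 0 x} ∪ {x ∈ Ico 0 1 | ¬ P n x}) :=
        measure_mono (symmDiff_setOf_forall_lt_succ_subset _ P n)
    _ ≤ volume {x ∈ Ico 0 1 | ¬ P 0 x} + volume {x ∈ Ico 0 1 | ¬ P n x} :=
        measure_union_le _ _
    _ ≤ Fintype.card ι * ENNReal.ofReal t + Fintype.card ι * ENNReal.ofReal t := by
        simp only [P, sub_add_eq_add_sub, add_sub_assoc]
        exact add_le_add (volume_setOf_not_outsideWindows_le a t _)
          (volume_setOf_not_outsideWindows_le a t _)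
    _ = 2 * Fintype.card ι * ENNReal.ofReal t := by ring

theorem stmt16_general (k : ℕ) (hk : 0 < k) (α : ℝ)
    (q : ℕ) (N : ℕ) (d : Fin N → ℝ)
    (δ : ℝ)
    (I : ℝ → ZMod k)
    (T : ℝ × ZMod k → ℝ × ZMod k)
    (hT : ∀ z, T z = (Int.fract (z.1 + α), z.2 + I z.1))
    (A : Set (ℝ × ZMod k))
    (hA : A = {x ∈ Set.Ico (0:ℝ) 1 |
        ∀ i < k * q, ∀ j : Fin N,
          ¬ Int.fract (x + (i : ℝ) * α - (d j - (k : ℝ) * δ)) < (k : ℝ) * δ}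
      ×ˢ (Set.univ : Set (ZMod k))) :
    (volume.prod Measure.count) (symmDiff A (T '' A))
      ≤ ENNReal.ofReal (2 * (k : ℝ)^2 * N * δ) := by
  have : NeZero k := ⟨hk.ne'⟩
  set S := orbitAvoidingSet (fun j => d j - k * δ) (k * δ) α (k * q)
  replace hA : A = S ×ˢ univ := hA
  have hTA : T '' A = ((fun x => Int.fract (x + α)) '' S) ×ˢ univ := by
    rw [hA, funext hT]
    exact image_skewProduct_prod_univ (fun x => Int.fract (x + α)) I S
  rw [hTA, hA, prod_univ, prod_univ, ← preimage_symmDiff, ← prod_univ, Measure.prod_prod,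
    Measure.count_univ, ENat.card_eq_coe_fintype_card, ZMod.card, ENat.toENNReal_coe]
  have hS := volume_symmDiff_image_orbitAvoidingSet_le (fun j => d j - k * δ) (k * δ) α (k * q)
  rw [Fintype.card_fin] at hS
  calc _ ≤ 2 * N * ENNReal.ofReal (k * δ) * k := mul_le_mul_left hS _
    _ = ENNReal.ofReal (2 * (k : ℝ)^2 * N * δ) := by
        rw [show 2 * (k : ℝ) ^ 2 * N * δ = (2 * N * k : ℕ) * (k * δ) by push_cast; ring,
          ENNReal.ofReal_mul (Nat.cast_nonneg (2 * N * k)), ENNReal.ofReal_natCast]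
        push_cast
        ring

/-- The set `A_n ⊆ S¹ × ℤ/kℤ` (the circle modelled as `[0,1)` via `Int.fract`),
obtained by removing the `k q_n` backward rotation-translates of `N` intervals of
length `k‖q_n α‖`, is nearly invariant under the skew product
`T(x,ℓ) = (x + α mod 1, ℓ + I(x))`:
`μ(A_n △ T(A_n)) ≤ 2 k² N ‖q_n α‖`, where `μ` is the product of Lebesgue measure
and counting measure. -/
theorem stmt16 (k : ℕ) (hk : 0 < k) (α : ℝ) (hα : Irrational α)
    (β c : ℝ) (hβ : β ∈ Set.Ioo (0:ℝ) 1)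
    (q : ℕ) (hq : 0 < q) (N : ℕ) (d : Fin N → ℝ)
    (δ : ℝ) (hδ : δ = |(q : ℝ) * α - round ((q : ℝ) * α)|)
    (I : ℝ → ZMod k) (hI : ∀ x, I x = if Int.fract (x - c) < β then 1 else 0)
    (T : ℝ × ZMod k → ℝ × ZMod k)
    (hT : ∀ z, T z = (Int.fract (z.1 + α), z.2 + I z.1))
    (A : Set (ℝ × ZMod k))
    (hA : A = {x ∈ Set.Ico (0:ℝ) 1 |
        ∀ i < k * q, ∀ j : Fin N,
          ¬ Int.fract (x + (i : ℝ) * α - (d j - (k : ℝ) * δ)) < (k : ℝ) * δ}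
      ×ˢ (Set.univ : Set (ZMod k))) :
    (volume.prod Measure.count) (symmDiff A (T '' A))
      ≤ ENNReal.ofReal (2 * (k : ℝ)^2 * N * δ) :=
  stmt16_general k hk α q N d δ I T hT A hA
end

section
/- Let α be irrational with convergents p_n/q_n, let 0 < β < 1, fix a positive integer k, and suppose x ∈ S^1 is such that for all 0 ≤ i < k q_n, the points x + iα and x + i p_n/q_n (mod 1) lie in the same piece of the partition {[0,β), [β,1)}. Then for each 0 ≤ m < k, Σ_{i=m q_n}^{(m+1)q_n - 1} 1_{[0,β)}(x + iα mod 1) = Σ_{i=0}^{q_n - 1} 1_{[0,β)}(x + i p_n/q_n mod 1), i.e., each consecutive block of q_n rotation orbit points visits [0, β) the same number of times. -/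
/-! The rotation by `p/q` returns every point to itself after `q` steps, so each block of `q`
consecutive rational orbit points is one full period; on the block `[m q, (m+1) q)` with
`m < k` the irrational orbit makes the same visits to `[0, β)` as the rational one. -/

theorem Finset.sum_Ico_mul_eq_sum_range {M : Type*} [AddCommMonoid M] {f g : ℕ → M}
    (m q : ℕ) (hfg : ∀ j < q, f (m * q + j) = g j) :
    ∑ i ∈ Finset.Ico (m * q) ((m + 1) * q), f i = ∑ j ∈ Finset.range q, g j := by
  rw [Finset.sum_Ico_eq_sum_range, show (m + 1) * q - m * q = q by rw [add_one_mul]; omega]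
  exact Finset.sum_congr rfl fun j hj => hfg j (Finset.mem_range.mp hj)

theorem Int.fract_add_nat_mul_div_periodic (x : ℝ) (p : ℤ) {q : ℕ} (hq : q ≠ 0) (m j : ℕ) :
    Int.fract (x + ((m * q + j : ℕ) : ℝ) * ((p : ℝ) / q)) =
      Int.fract (x + (j : ℝ) * ((p : ℝ) / q)) := by
  rw [Int.fract_eq_fract]
  refine ⟨m * p, ?_⟩
  push_cast
  field_simp
  ring

theorem stmt17_general (α : ℝ) (β : ℝ)
    (k : ℕ) (p : ℤ) (q : ℕ) (x : ℝ)
    (hgood : ∀ i < k * q,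
      (Int.fract (x + (i : ℝ) * α) < β ↔ Int.fract (x + (i : ℝ) * ((p : ℝ) / q)) < β)) :
    ∀ m < k,
      (∑ i ∈ Finset.Ico (m * q) ((m + 1) * q),
          if Int.fract (x + (i : ℝ) * α) < β then (1 : ℕ) else 0)
        = ∑ i ∈ Finset.range q,
            if Int.fract (x + (i : ℝ) * ((p : ℝ) / q)) < β then (1 : ℕ) else 0 := by
  intro m hm
  refine Finset.sum_Ico_mul_eq_sum_range m q fun j hj => ?_
  have hi : m * q + j < k * q := calc
    m * q + j < (m + 1) * q := by rw [add_one_mul]; omega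
    _ ≤ k * q := Nat.mul_le_mul_right q hm
  rw [if_congr (hgood _ hi) rfl rfl,
    Int.fract_add_nat_mul_div_periodic x p (by omega) m j]

/-- If through time `k q_n` the irrational orbit `x + iα` and the rational orbit
`x + i p_n/q_n` (mod 1) always lie in the same piece of the partition
`{[0,β), [β,1)}`, then each consecutive block of `q_n` irrational orbit points
visits `[0,β)` the same number of times as one full rational period. -/
theorem stmt17 (α : ℝ) (hα : Irrational α) (β : ℝ) (hβ : β ∈ Set.Ioo (0:ℝ) 1)
    (k : ℕ) (hk : 0 < k) (p : ℤ) (q : ℕ) (hq : 0 < q) (x : ℝ)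
    (hgood : ∀ i < k * q,
      (Int.fract (x + (i : ℝ) * α) < β ↔ Int.fract (x + (i : ℝ) * ((p : ℝ) / q)) < β)) :
    ∀ m < k,
      (∑ i ∈ Finset.Ico (m * q) ((m + 1) * q),
          if Int.fract (x + (i : ℝ) * α) < β then (1 : ℕ) else 0)
        = ∑ i ∈ Finset.range q,
            if Int.fract (x + (i : ℝ) * ((p : ℝ) / q)) < β then (1 : ℕ) else 0 :=
  stmt17_general α β k p q x hgood
end
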